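/- For any finite simple graph G on n vertices, the independence number α(G) is at most the Lovász theta number ϑ(G). -/

import Mathlib

open scoped BigOperators

/-- The Lovász theta number of a graph `G` on `n` vertices. -/
noncomputable def lovaszTheta {n : ℕ} (G : SimpleGraph (Fin n)) : ℝ :=
  sSup {t : ℝ | ∃ X : Matrix (Fin n) (Fin n) ℝ, X.PosSemidef ∧
    X.trace = 1 ∧ (∀ i j, G.Adj i j → X i j = 0) ∧ t = ∑ i, ∑ j, X i j}

/-!
If `s` is independent, the rank-one matrix `𝟙_s 𝟙_sᵀ / |s|` is feasible for `ϑ(G)`: it is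
positive semidefinite of trace one, vanishes outside `s × s` and hence on every edge, and its
entries sum to `|s|`. The supremum is taken over a set bounded by `n`, because
`2 X i j ≤ X i i + X j j` for positive semidefinite `X`.
-/

open Matrix Finset

namespace Matrix.PosSemidef

variable {ι : Type*} [Fintype ι] {X : Matrix ι ι ℝ}

lemma sum_apply_nonneg (hX : X.PosSemidef) : 0 ≤ ∑ i, ∑ j, X i j := by
  simpa [dotProduct, mulVec, mul_sum] using hX.dotProduct_mulVec_nonneg 1

lemma two_mul_apply_le_add_diag (hX : X.PosSemidef) (i j : ι) :
    2 * X i j ≤ X i i + X j j := by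
  classical
  have hsymm : X j i = X i j := by simpa using congrFun₂ hX.1 i j
  have h := hX.dotProduct_mulVec_nonneg (Pi.single i 1 - Pi.single j 1)
  simp only [star_trivial, mulVec_sub, mulVec_single, MulOpposite.op_one, one_smul,
    dotProduct_sub, sub_dotProduct, single_dotProduct, col_apply, one_mul] at h
  linarith

lemma sum_apply_le_card_mul_trace (hX : X.PosSemidef) :
    ∑ i, ∑ j, X i j ≤ Fintype.card ι * X.trace := by
  calc ∑ i, ∑ j, X i j ≤ ∑ i, ∑ j, (X i i + X j j) / 2 := by
        gcongr with i _ j _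
        linarith [hX.two_mul_apply_le_add_diag i j]
    _ = Fintype.card ι * X.trace := by
        simp only [trace, diag, ← sum_div, sum_add_distrib, sum_const, card_univ,
          nsmul_eq_mul, ← mul_sum]
        ring

end Matrix.PosSemidef

namespace Finset

variable {ι : Type*} [DecidableEq ι] (s : Finset ι)

noncomputable def indicatorProjection : Matrix ι ι ℝ :=
  (#s : ℝ)⁻¹ • vecMulVec (fun i ↦ if i ∈ s then 1 else 0) (fun i ↦ if i ∈ s then 1 else 0)

lemma indicatorProjection_apply (i j : ι) :
    s.indicatorProjection i j = if i ∈ s ∧ j ∈ s then (#s : ℝ)⁻¹ else 0 := by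
  by_cases hi : i ∈ s <;> by_cases hj : j ∈ s <;>
    simp [indicatorProjection, vecMulVec_apply, hi, hj]

variable [Fintype ι]

lemma posSemidef_indicatorProjection : s.indicatorProjection.PosSemidef :=
  (posSemidef_vecMulVec_self_star _).smul (by positivity)

lemma trace_indicatorProjection (hs : s.Nonempty) : s.indicatorProjection.trace = 1 := by
  simp [trace, indicatorProjection_apply, sum_ite_mem, hs.card_ne_zero]

lemma sum_indicatorProjection_apply : ∑ i, ∑ j, s.indicatorProjection i j = #s := by
  rcases s.eq_empty_or_nonempty with rfl | hs
  · simp [indicatorProjection_apply]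
  · simp [indicatorProjection_apply, ite_and, sum_ite_mem, hs.card_ne_zero]

end Finset

section LovaszTheta

variable {n : ℕ} (G : SimpleGraph (Fin n))

lemma lovaszTheta_nonneg : 0 ≤ lovaszTheta G :=
  Real.sSup_nonneg <| by rintro t ⟨X, hX, -, -, rfl⟩; exact hX.sum_apply_nonneg

lemma sum_apply_le_lovaszTheta {X : Matrix (Fin n) (Fin n) ℝ} (hX : X.PosSemidef)
    (htr : X.trace = 1) (hG : ∀ i j, G.Adj i j → X i j = 0) :
    ∑ i, ∑ j, X i j ≤ lovaszTheta G := by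
  refine le_csSup ⟨n, ?_⟩ ⟨X, hX, htr, hG, rfl⟩
  rintro t ⟨Y, hY, hYtr, -, rfl⟩
  simpa [hYtr] using hY.sum_apply_le_card_mul_trace

end LovaszTheta

/-- The independence number is at most the Lovász theta number. -/
theorem indepNum_le_lovaszTheta {n : ℕ} (G : SimpleGraph (Fin n)) :
    ∀ s : Finset (Fin n), (∀ i ∈ s, ∀ j ∈ s, i ≠ j → ¬ G.Adj i j) →
      (s.card : ℝ) ≤ lovaszTheta G := by
  intro s hs
  rcases s.eq_empty_or_nonempty with rfl | hne
  -- the witness has trace `0` when `s = ∅`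
  · simpa using lovaszTheta_nonneg G
  rw [← s.sum_indicatorProjection_apply]
  refine sum_apply_le_lovaszTheta G s.posSemidef_indicatorProjection
    (s.trace_indicatorProjection hne) fun i j hij ↦ ?_
  rw [indicatorProjection_apply, if_neg]
  rintro ⟨hi, hj⟩
  exact hs i hi j hj hij.ne hij
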